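/- Key inequalities in the degree-threshold proof for the social optimum: let y* be an admissible social planner action with y*_{d†} > 0 and y*_{d'} < m_{d'} for some d' > d†, and let y† = y* + ε(u_{d'} − u_{d†}) for 0 < ε < min(y*_{d†}, m_{d'} − y*_{d'}). Then γ(y†) < γ(y*) and λ(y†) < λ(y*), and consequently e(y†) < e(y*). -/

import Mathlib

open Finset

/-- `𝒟 = {1, …, D_max}`. -/
def Dset (Dmax : ℕ) : Finset ℕ := Finset.Icc 1 Dmax

/-- Weighted degree distribution `w_d = d·m_d / ∑ d'·m_{d'}`. -/
noncomputable def wgt (Dmax : ℕ) (m : ℕ → ℝ) (d : ℕ) : ℝ :=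
  (d : ℝ) * m d / ∑ d' ∈ Dset Dmax, (d' : ℝ) * m d'

/-- `γ(y) = β_IA · ∑_d w_d (p_U − (y_d/m_d)·Δp)` where `Δp = p_U − p_P`. -/
noncomputable def gam (Dmax : ℕ) (m : ℕ → ℝ) (pP pU βIA : ℝ) (y : ℕ → ℝ) : ℝ :=
  βIA * ∑ d ∈ Dset Dmax, wgt Dmax m d * (pU - (y d / m d) * (pU - pP))

/-- `λ(y) = β_IA · ∑_d w_d (d−1) (p_U − (y_d/m_d)·Δp)`. -/
noncomputable def lamb (Dmax : ℕ) (m : ℕ → ℝ) (pP pU βIA : ℝ) (y : ℕ → ℝ) : ℝ :=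
  βIA * ∑ d ∈ Dset Dmax, wgt Dmax m d * ((d : ℝ) - 1) * (pU - (y d / m d) * (pU - pP))

/-- Risk exposure `e(y) = γ(y) · ∑_{k=1}^{K} λ(y)^{k−1}`. -/
noncomputable def expo (Dmax : ℕ) (m : ℕ → ℝ) (pP pU βIA : ℝ) (K : ℕ)
    (y : ℕ → ℝ) : ℝ :=
  gam Dmax m pP pU βIA y * ∑ k ∈ Finset.range K, lamb Dmax m pP pU βIA y ^ k

/-- Social cost
`SC(y) = ∑_d [ y_d·C_{d,P}(X(y)) + (m_d − y_d)·C_{d,N}(X(y)) ]` with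
`C_{d,P} = τ(1 + d·e(y))L_P + c_P` and `C_{d,N} = τ(1 + d·e(y))L_U`. -/
noncomputable def SC (Dmax : ℕ) (m : ℕ → ℝ) (pP pU βIA τ LP LU cP : ℝ) (K : ℕ)
    (y : ℕ → ℝ) : ℝ :=
  ∑ d ∈ Dset Dmax,
    (y d * (τ * (1 + (d : ℝ) * expo Dmax m pP pU βIA K y) * LP + cP)
      + (m d - y d) * (τ * (1 + (d : ℝ) * expo Dmax m pP pU βIA K y) * LU))

/-- Admissible social planner action: `y_d ∈ [0, m_d]` for each `d ∈ 𝒟`. -/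
def isPlan (Dmax : ℕ) (m : ℕ → ℝ) (y : ℕ → ℝ) : Prop :=
  ∀ d ∈ Dset Dmax, 0 ≤ y d ∧ y d ≤ m d

/-!
Both `γ` and `λ` are affine in `y`: with `S = ∑_d d·m_d`, the coordinate `y_d` enters with
coefficient `-β_IA·Δp·d·g_d / S`, where `g ≡ 1` for `γ` and `g_d = d - 1` for `λ`. Since
`d·g_d` is strictly increasing on `d ≥ 1`, moving mass `ε` from `d†` to `d' > d†` lowers both.
The shifted plan is still admissible, so `γ` and `λ` stay nonnegative there, and
`e = γ·∑_{k<K} λ^k` is strictly increasing in `γ` and weakly increasing in `λ ≥ 0`.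
-/

/-- The plan `y + ε·(u_dst - u_src)`. -/
def shiftPlan (y : ℕ → ℝ) (ε : ℝ) (src dst : ℕ) : ℕ → ℝ :=
  fun d => y d + ε * ((if d = dst then 1 else 0) - (if d = src then 1 else 0))

lemma sum_mul_shiftPlan {s : Finset ℕ} {src dst : ℕ} (hsrc : src ∈ s) (hdst : dst ∈ s)
    (c y : ℕ → ℝ) (ε : ℝ) :
    ∑ d ∈ s, c d * shiftPlan y ε src dst d = ∑ d ∈ s, c d * y d + ε * (c dst - c src) := by
  simp only [shiftPlan, mul_add, mul_sub, mul_ite, mul_one, mul_zero, Finset.sum_add_distrib,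
    Finset.sum_sub_distrib, Finset.sum_ite_eq', hsrc, hdst, if_true]
  ring

lemma isPlan_shiftPlan {Dmax : ℕ} {m y : ℕ → ℝ} (hy : isPlan Dmax m y) {src dst : ℕ}
    (hne : src ≠ dst) {ε : ℝ} (hε0 : 0 ≤ ε) (hsrc : ε ≤ y src) (hdst : ε ≤ m dst - y dst) :
    isPlan Dmax m (shiftPlan y ε src dst) := by
  intro d hd
  obtain ⟨h0, h1⟩ := hy d hd
  by_cases hd_dst : d = dst
  · subst hd_dst
    simp only [shiftPlan, if_neg hne.symm, ↓reduceIte]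
    constructor <;> linarith
  · by_cases hd_src : d = src
    · subst hd_src
      simp only [shiftPlan, if_neg hd_dst, ↓reduceIte]
      constructor <;> linarith
    · simp only [shiftPlan, if_neg hd_dst, if_neg hd_src]
      constructor <;> linarith

section Weights

variable {Dmax : ℕ} {m : ℕ → ℝ}

lemma sum_natCast_mul_pos (hm : ∀ d ∈ Dset Dmax, 0 < m d) {a : ℕ} (ha : a ∈ Dset Dmax) :
    0 < ∑ d ∈ Dset Dmax, (d : ℝ) * m d := by
  refine Finset.sum_pos (fun d hd => mul_pos ?_ (hm d hd)) ⟨a, ha⟩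
  exact_mod_cast (Finset.mem_Icc.mp hd).1

lemma wgt_nonneg (hm : ∀ d ∈ Dset Dmax, 0 < m d) {d : ℕ} (hd : d ∈ Dset Dmax) :
    0 ≤ wgt Dmax m d :=
  div_nonneg (mul_nonneg d.cast_nonneg (hm d hd).le) (sum_natCast_mul_pos hm hd).le

lemma wgt_mul_div (hm : ∀ d ∈ Dset Dmax, 0 < m d) {d : ℕ} (hd : d ∈ Dset Dmax) (x : ℝ) :
    wgt Dmax m d * (x / m d) = d * x / ∑ d' ∈ Dset Dmax, (d' : ℝ) * m d' := by
  have := (hm d hd).ne'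
  simp only [wgt]
  field_simp

/-- The common shape of `γ` and `λ` (without the factor `β_IA`), with `g_d` the
extra per-degree factor. -/
lemma sum_wgt_mul_eq (hm : ∀ d ∈ Dset Dmax, 0 < m d) (g y : ℕ → ℝ) (pU Δ : ℝ) :
    ∑ d ∈ Dset Dmax, wgt Dmax m d * g d * (pU - y d / m d * Δ)
      = pU * ∑ d ∈ Dset Dmax, wgt Dmax m d * g d
        - Δ / (∑ d ∈ Dset Dmax, (d : ℝ) * m d) * ∑ d ∈ Dset Dmax, (d * g d) * y d := by
  rw [Finset.mul_sum, Finset.mul_sum, ← Finset.sum_sub_distrib]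
  refine Finset.sum_congr rfl fun d hd => ?_
  have h := wgt_mul_div hm hd (y d)
  calc wgt Dmax m d * g d * (pU - y d / m d * Δ)
      = pU * (wgt Dmax m d * g d) - Δ * g d * (wgt Dmax m d * (y d / m d)) := by ring
    _ = _ := by rw [h]; ring

lemma sum_wgt_mul_shiftPlan_lt (hm : ∀ d ∈ Dset Dmax, 0 < m d) {g y : ℕ → ℝ} {pU Δ : ℝ}
    (hΔ : 0 < Δ) {src dst : ℕ} (hsrc : src ∈ Dset Dmax) (hdst : dst ∈ Dset Dmax)
    (hg : src * g src < dst * g dst) {ε : ℝ} (hε : 0 < ε) :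
    ∑ d ∈ Dset Dmax, wgt Dmax m d * g d * (pU - shiftPlan y ε src dst d / m d * Δ)
      < ∑ d ∈ Dset Dmax, wgt Dmax m d * g d * (pU - y d / m d * Δ) := by
  rw [sum_wgt_mul_eq hm, sum_wgt_mul_eq hm, sum_mul_shiftPlan hsrc hdst]
  have hc : 0 < Δ / ∑ d ∈ Dset Dmax, (d : ℝ) * m d :=
    div_pos hΔ (sum_natCast_mul_pos hm hsrc)
  have hshift : 0 < ε * (dst * g dst - src * g src) := mul_pos hε (sub_pos.mpr hg)
  linarith [mul_pos hc hshift]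

lemma sub_mul_div_nonneg_of_isPlan (hm : ∀ d ∈ Dset Dmax, 0 < m d) {pP pU : ℝ} (hpP : 0 ≤ pP)
    (hp : pP ≤ pU) {y : ℕ → ℝ} (hy : isPlan Dmax m y) {d : ℕ} (hd : d ∈ Dset Dmax) :
    0 ≤ pU - y d / m d * (pU - pP) := by
  have hfrac : y d / m d ≤ 1 := (div_le_one (hm d hd)).mpr (hy d hd).2
  have : y d / m d * (pU - pP) ≤ pU - pP := mul_le_of_le_one_left (sub_nonneg.mpr hp) hfrac
  linarith

end Weights

section Planner

variable {Dmax : ℕ} {m : ℕ → ℝ} {pP pU βIA : ℝ}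

lemma gam_nonneg (hm : ∀ d ∈ Dset Dmax, 0 < m d) (hpP : 0 ≤ pP) (hp : pP ≤ pU)
    (hβ : 0 ≤ βIA) {y : ℕ → ℝ} (hy : isPlan Dmax m y) :
    0 ≤ gam Dmax m pP pU βIA y :=
  mul_nonneg hβ <| Finset.sum_nonneg fun _ hd =>
    mul_nonneg (wgt_nonneg hm hd) (sub_mul_div_nonneg_of_isPlan hm hpP hp hy hd)

lemma lamb_nonneg (hm : ∀ d ∈ Dset Dmax, 0 < m d) (hpP : 0 ≤ pP) (hp : pP ≤ pU)
    (hβ : 0 ≤ βIA) {y : ℕ → ℝ} (hy : isPlan Dmax m y) :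
    0 ≤ lamb Dmax m pP pU βIA y := by
  refine mul_nonneg hβ <| Finset.sum_nonneg fun d hd => ?_
  have hd1 : (1 : ℝ) ≤ d := by exact_mod_cast (Finset.mem_Icc.mp hd).1
  exact mul_nonneg (mul_nonneg (wgt_nonneg hm hd) (by linarith))
    (sub_mul_div_nonneg_of_isPlan hm hpP hp hy hd)

lemma gam_shiftPlan_lt (hm : ∀ d ∈ Dset Dmax, 0 < m d) (hp : pP < pU) (hβ : 0 < βIA)
    (y : ℕ → ℝ) {src dst : ℕ} (hsrc : src ∈ Dset Dmax) (hdst : dst ∈ Dset Dmax)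
    (hlt : src < dst) {ε : ℝ} (hε : 0 < ε) :
    gam Dmax m pP pU βIA (shiftPlan y ε src dst) < gam Dmax m pP pU βIA y := by
  have h := sum_wgt_mul_shiftPlan_lt (g := fun _ => 1) (y := y) (pU := pU) hm (sub_pos.mpr hp)
    hsrc hdst (by simpa using hlt) hε
  simp only [mul_one] at h
  exact mul_lt_mul_of_pos_left h hβ

lemma lamb_shiftPlan_lt (hm : ∀ d ∈ Dset Dmax, 0 < m d) (hp : pP < pU) (hβ : 0 < βIA)
    (y : ℕ → ℝ) {src dst : ℕ} (hsrc : src ∈ Dset Dmax) (hdst : dst ∈ Dset Dmax)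
    (hlt : src < dst) {ε : ℝ} (hε : 0 < ε) :
    lamb Dmax m pP pU βIA (shiftPlan y ε src dst) < lamb Dmax m pP pU βIA y := by
  have hsrc1 : (1 : ℝ) ≤ src := by exact_mod_cast (Finset.mem_Icc.mp hsrc).1
  have hlt' : (src : ℝ) + 1 ≤ dst := by exact_mod_cast hlt
  have hg : (src : ℝ) * (src - 1) < dst * (dst - 1) := by nlinarith
  exact mul_lt_mul_of_pos_left
    (sum_wgt_mul_shiftPlan_lt hm (sub_pos.mpr hp) hsrc hdst hg hε) hβ

end Planner

lemma mul_geom_sum_lt_mul_geom_sum {γ₁ γ₀ l₁ l₀ : ℝ} {K : ℕ} (hK : K ≠ 0) (hγ₁ : 0 ≤ γ₁)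
    (hγ : γ₁ < γ₀) (hl₁ : 0 ≤ l₁) (hl : l₁ ≤ l₀) :
    γ₁ * ∑ k ∈ Finset.range K, l₁ ^ k < γ₀ * ∑ k ∈ Finset.range K, l₀ ^ k := by
  have hsum_pos : 0 < ∑ k ∈ Finset.range K, l₀ ^ k := geom_sum_pos (hl₁.trans hl) hK
  calc γ₁ * ∑ k ∈ Finset.range K, l₁ ^ k ≤ γ₁ * ∑ k ∈ Finset.range K, l₀ ^ k := by gcongr
    _ < γ₀ * ∑ k ∈ Finset.range K, l₀ ^ k := mul_lt_mul_of_pos_right hγ hsum_pos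

theorem planner_shift_decreases_exposure_general (Dmax : ℕ)
    (m : ℕ → ℝ) (hm : ∀ d ∈ Dset Dmax, 0 < m d)
    (pP pU βIA : ℝ) (K : ℕ)
    (hpP : 0 ≤ pP) (hp : pP < pU)
    (hβ0 : 0 < βIA) (hK : 1 ≤ K)
    (ystar : ℕ → ℝ) (hplan : isPlan Dmax m ystar)
    (ddag d' : ℕ) (hddag : ddag ∈ Dset Dmax) (hd' : d' ∈ Dset Dmax)
    (hlt : ddag < d')
    (ε : ℝ) (hε0 : 0 < ε) (hε : ε < min (ystar ddag) (m d' - ystar d')) :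
    gam Dmax m pP pU βIA
        (fun d => ystar d + ε * ((if d = d' then 1 else 0) - (if d = ddag then 1 else 0)))
      < gam Dmax m pP pU βIA ystar ∧
    lamb Dmax m pP pU βIA
        (fun d => ystar d + ε * ((if d = d' then 1 else 0) - (if d = ddag then 1 else 0)))
      < lamb Dmax m pP pU βIA ystar ∧
    expo Dmax m pP pU βIA K
        (fun d => ystar d + ε * ((if d = d' then 1 else 0) - (if d = ddag then 1 else 0)))
      < expo Dmax m pP pU βIA K ystar := by
  have hεy : ε ≤ ystar ddag := (hε.trans_le (min_le_left _ _)).le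
  have hεm : ε ≤ m d' - ystar d' := (hε.trans_le (min_le_right _ _)).le
  have hshift : isPlan Dmax m (shiftPlan ystar ε ddag d') :=
    isPlan_shiftPlan hplan hlt.ne hε0.le hεy hεm
  have hgam := gam_shiftPlan_lt (pP := pP) hm hp hβ0 ystar hddag hd' hlt hε0
  have hlamb := lamb_shiftPlan_lt (pP := pP) hm hp hβ0 ystar hddag hd' hlt hε0
  refine ⟨hgam, hlamb, ?_⟩
  exact mul_geom_sum_lt_mul_geom_sum (by omega) (gam_nonneg hm hpP hp.le hβ0.le hshift) hgam
    (lamb_nonneg hm hpP hp.le hβ0.le hshift) hlamb.le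

/-- key inequalities in the degree-threshold proof for the social
optimum: shifting mass `ε` from protection at degree `d†` to protection at a larger
degree `d' > d†` strictly decreases `γ`, `λ`, and hence the exposure `e`. -/
theorem planner_shift_decreases_exposure (Dmax : ℕ) (hD : 1 ≤ Dmax)
    (m : ℕ → ℝ) (hm : ∀ d ∈ Dset Dmax, 0 < m d)
    (pP pU βIA : ℝ) (K : ℕ)
    (hpP : 0 ≤ pP) (hp : pP < pU) (hpU : pU ≤ 1)
    (hβ0 : 0 < βIA) (hβ1 : βIA ≤ 1) (hK : 1 ≤ K)
    (ystar : ℕ → ℝ) (hplan : isPlan Dmax m ystar)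
    (ddag d' : ℕ) (hddag : ddag ∈ Dset Dmax) (hd' : d' ∈ Dset Dmax)
    (hlt : ddag < d')
    (ε : ℝ) (hε0 : 0 < ε) (hε : ε < min (ystar ddag) (m d' - ystar d')) :
    gam Dmax m pP pU βIA
        (fun d => ystar d + ε * ((if d = d' then 1 else 0) - (if d = ddag then 1 else 0)))
      < gam Dmax m pP pU βIA ystar ∧
    lamb Dmax m pP pU βIA
        (fun d => ystar d + ε * ((if d = d' then 1 else 0) - (if d = ddag then 1 else 0)))
      < lamb Dmax m pP pU βIA ystar ∧
    expo Dmax m pP pU βIA K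
        (fun d => ystar d + ε * ((if d = d' then 1 else 0) - (if d = ddag then 1 else 0)))
      < expo Dmax m pP pU βIA K ystar :=
  planner_shift_decreases_exposure_general Dmax m hm pP pU βIA K hpP hp hβ0 hK ystar hplan ddag d'
    hddag hd' hlt ε hε0 hε
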